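/- arXiv:1704.04391 — 2 statements merged into one kernel-verified Lean document; each statement's English description precedes it below -/
import Mathlib

section
/- Let q ≥ 1 be a real number, F : [0,∞)² → ℝ a continuous function homogeneous of degree q, and suppose the 1-homogeneous function G defined by G(u^q, v^q) = F(u, v) for all u, v ≥ 0 is concave. Then for all nonnegative functions u, v ∈ L^q(ℝ^N), ∫_{ℝ^N} F(u(x), v(x)) dx ≤ F(‖u‖_{L^q}, ‖v‖_{L^q}). -/
open Real MeasureTheory Set

/-!
A concave, positively 1-homogeneous `G` on the quadrant has, at every interior point `(A, B)`, a
supporting *linear* function `p a + m b`: a supporting line of the slice `s ↦ G (1, s)` at `B / A`,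
transported by homogeneity. With `(A, B) = (∫ u ^ q, ∫ v ^ q)`, integrating
`F (u, v) = G (u ^ q, v ^ q) ≤ p u ^ q + m v ^ q` gives `∫ F (u, v) ≤ G (A, B)`, which is the
right-hand side. If one of the integrals vanishes, that function is `0` a.e. and `G` is linear on
the remaining axis.
-/

theorem ConcaveOn.exists_le_add_mul_sub_of_mem_interior {S : Set ℝ} {f : ℝ → ℝ} {x : ℝ}
    (hf : ConcaveOn ℝ S f) (hx : x ∈ interior S) :
    ∃ m : ℝ, ∀ y ∈ S, f y ≤ f x + m * (y - x) := by
  have hf' : ConvexOn ℝ S (-f) := hf.neg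
  refine ⟨-derivWithin (-f) (Ioi x) x, fun y hy => ?_⟩
  rcases lt_trichotomy y x with hyx | rfl | hxy
  · have h := (hf'.slope_le_leftDeriv_of_mem_interior hy hx hyx).trans
      (hf'.leftDeriv_le_rightDeriv_of_mem_interior hx)
    rw [slope_def_field, div_le_iff₀ (sub_pos.2 hyx)] at h
    simp only [Pi.neg_apply] at h
    linarith
  · simp
  · have h := hf'.rightDeriv_le_slope_of_mem_interior hx hy hxy
    rw [slope_def_field, le_div_iff₀ (sub_pos.2 hxy)] at h
    simp only [Pi.neg_apply] at h
    linarith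

def OneHomogeneousOnQuadrant (G : ℝ × ℝ → ℝ) : Prop :=
  ∀ t : ℝ, 0 < t → ∀ a b : ℝ, 0 ≤ a → 0 ≤ b → G (t * a, t * b) = t * G (a, b)

/-- The midpoint of `(a, b)` and `(A, B)` has positive first coordinate, so the linear bound holds
there; concavity at that midpoint transfers it to `(a, b)`. -/
theorem ConcaveOn.le_linear_of_le_linear_of_fst_pos {G : ℝ × ℝ → ℝ}
    (hGconc : ConcaveOn ℝ {z : ℝ × ℝ | 0 ≤ z.1 ∧ 0 ≤ z.2} G) {A B p m : ℝ} (hA : 0 < A)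
    (hB : 0 ≤ B) (hAB : G (A, B) = p * A + m * B)
    (hle : ∀ a b : ℝ, 0 < a → 0 ≤ b → G (a, b) ≤ p * a + m * b) {a b : ℝ} (ha : 0 ≤ a)
    (hb : 0 ≤ b) : G (a, b) ≤ p * a + m * b := by
  have hmid := hGconc.2 (x := (a, b)) (y := (A, B)) ⟨ha, hb⟩ ⟨hA.le, hB⟩
    (by norm_num : (0 : ℝ) ≤ 1 / 2) (by norm_num : (0 : ℝ) ≤ 1 / 2) (by norm_num)
  simp only [Prod.smul_mk, Prod.mk_add_mk, smul_eq_mul] at hmid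
  have := hle (1 / 2 * a + 1 / 2 * A) (1 / 2 * b + 1 / 2 * B) (by positivity) (by positivity)
  linarith

namespace OneHomogeneousOnQuadrant

variable {G : ℝ × ℝ → ℝ} {α : Type*} [MeasurableSpace α] {μ : Measure α} {f g : α → ℝ}

theorem map_zero (hG : OneHomogeneousOnQuadrant G) : G (0, 0) = 0 := by
  have h := hG 2 two_pos 0 0 le_rfl le_rfl
  simp only [mul_zero] at h
  linarith

theorem map_mul_of_nonneg (hG : OneHomogeneousOnQuadrant G) {t : ℝ} (ht : 0 ≤ t) {a b : ℝ}
    (ha : 0 ≤ a) (hb : 0 ≤ b) : G (t * a, t * b) = t * G (a, b) := by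
  rcases ht.eq_or_lt with rfl | ht
  · simp [hG.map_zero]
  · exact hG t ht a b ha hb

theorem comp_swap (hG : OneHomogeneousOnQuadrant G) : OneHomogeneousOnQuadrant (G ∘ Prod.swap) :=
  fun t ht a b ha hb => hG t ht b a hb ha

theorem exists_linear_ge (hGhom : OneHomogeneousOnQuadrant G)
    (hGconc : ConcaveOn ℝ {z : ℝ × ℝ | 0 ≤ z.1 ∧ 0 ≤ z.2} G) {A B : ℝ} (hA : 0 < A)
    (hB : 0 < B) :
    ∃ p m : ℝ, G (A, B) = p * A + m * B ∧
      ∀ a b : ℝ, 0 ≤ a → 0 ≤ b → G (a, b) ≤ p * a + m * b := by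
  set g : ℝ → ℝ := fun s => G (1, s)
  have hg : ConcaveOn ℝ (Ici 0) g := by
    refine ⟨convex_Ici 0, fun x hx y hy c d hc hd hcd => ?_⟩
    have := hGconc.2 (x := (1, x)) (y := (1, y)) ⟨zero_le_one, hx⟩ ⟨zero_le_one, hy⟩ hc hd hcd
    simpa only [Prod.smul_mk, Prod.mk_add_mk, smul_eq_mul, mul_one, hcd] using this
  have hslice (a b : ℝ) (ha : 0 < a) (hb : 0 ≤ b) : G (a, b) = a * g (b / a) := by
    simpa [g, mul_div_cancel₀ _ ha.ne'] using hGhom a ha 1 (b / a) zero_le_one (by positivity)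
  obtain ⟨m, hm⟩ := hg.exists_le_add_mul_sub_of_mem_interior
    (by rw [interior_Ici]; exact div_pos hB hA : B / A ∈ interior (Ici 0))
  set p := g (B / A) - m * (B / A) with hp
  have hAB : G (A, B) = p * A + m * B := by
    rw [hslice A B hA hB.le, hp]
    field_simp
    ring
  have hpos (a b : ℝ) (ha : 0 < a) (hb : 0 ≤ b) : G (a, b) ≤ p * a + m * b :=
    calc G (a, b) = a * g (b / a) := hslice a b ha hb
      _ ≤ a * (g (B / A) + m * (b / a - B / A)) :=
          mul_le_mul_of_nonneg_left (hm _ (div_nonneg hb ha.le)) ha.le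
      _ = p * a + m * b := by rw [hp]; field_simp; ring
  exact ⟨p, m, hAB, fun a b ha hb => hGconc.le_linear_of_le_linear_of_fst_pos hA hB.le hAB hpos ha hb⟩

theorem integral_comp_of_fst_ae_eq_zero (hG : OneHomogeneousOnQuadrant G) (hf : f =ᵐ[μ] 0)
    (hg0 : 0 ≤ g) : ∫ x, G (f x, g x) ∂μ = G (0, ∫ x, g x ∂μ) := by
  have hray (b : ℝ) (hb : 0 ≤ b) : G (0, b) = b * G (0, 1) := by
    simpa using hG.map_mul_of_nonneg hb le_rfl zero_le_one
  calc ∫ x, G (f x, g x) ∂μ = ∫ x, g x * G (0, 1) ∂μ :=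
        integral_congr_ae (by filter_upwards [hf] with x hx; rw [hx, Pi.zero_apply, hray _ (hg0 x)])
    _ = G (0, ∫ x, g x ∂μ) := by rw [integral_mul_const, hray _ (integral_nonneg hg0)]

theorem integral_comp_le (hG : OneHomogeneousOnQuadrant G)
    (hGconc : ConcaveOn ℝ {z : ℝ × ℝ | 0 ≤ z.1 ∧ 0 ≤ z.2} G) (hf0 : 0 ≤ f)
    (hg0 : 0 ≤ g) (hf : Integrable f μ) (hg : Integrable g μ)
    (hfg : Integrable (fun x => G (f x, g x)) μ) :
    ∫ x, G (f x, g x) ∂μ ≤ G (∫ x, f x ∂μ, ∫ x, g x ∂μ) := by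
  rcases (integral_nonneg hf0).eq_or_lt with hA | hA
  · have hf_ae : f =ᵐ[μ] 0 := (integral_eq_zero_iff_of_nonneg hf0 hf).1 hA.symm
    rw [hG.integral_comp_of_fst_ae_eq_zero hf_ae hg0, ← hA]
  rcases (integral_nonneg hg0).eq_or_lt with hB | hB
  · have hg_ae : g =ᵐ[μ] 0 := (integral_eq_zero_iff_of_nonneg hg0 hg).1 hB.symm
    exact (hG.comp_swap.integral_comp_of_fst_ae_eq_zero hg_ae hf0).le.trans_eq (by rw [← hB]; rfl)
  obtain ⟨p, m, hAB, hle⟩ := hG.exists_linear_ge hGconc hA hB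
  calc ∫ x, G (f x, g x) ∂μ ≤ ∫ x, (p * f x + m * g x) ∂μ :=
        integral_mono hfg ((hf.const_mul p).add (hg.const_mul m)) fun x => hle _ _ (hf0 x) (hg0 x)
    _ = G (∫ x, f x ∂μ, ∫ x, g x ∂μ) := by
      rw [integral_add (hf.const_mul p) (hg.const_mul m), integral_const_mul, integral_const_mul,
        hAB]

end OneHomogeneousOnQuadrant

theorem holder_type_inequality_general (N : ℕ) (q : ℝ) (hq : 1 ≤ q) (F : ℝ × ℝ → ℝ)
    (G : ℝ × ℝ → ℝ)
    (hG : ∀ u v : ℝ, 0 ≤ u → 0 ≤ v → G (u ^ q, v ^ q) = F (u, v))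
    (hGhom : ∀ t : ℝ, 0 < t → ∀ a b : ℝ, 0 ≤ a → 0 ≤ b → G (t * a, t * b) = t * G (a, b))
    (hGconc : ConcaveOn ℝ {z : ℝ × ℝ | 0 ≤ z.1 ∧ 0 ≤ z.2} G)
    (u v : EuclideanSpace ℝ (Fin N) → ℝ)
    (hu0 : ∀ x, 0 ≤ u x) (hv0 : ∀ x, 0 ≤ v x)
    (huq : Integrable (fun x => u x ^ q)) (hvq : Integrable (fun x => v x ^ q))
    (hFint : Integrable (fun x => F (u x, v x))) :
    ∫ x, F (u x, v x) ≤
      F ((∫ x, u x ^ q) ^ (1 / q), (∫ x, v x ^ q) ^ (1 / q)) := by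
  have hq0 : q ≠ 0 := (zero_lt_one.trans_le hq).ne'
  have huq0 : 0 ≤ fun x => u x ^ q := fun x => rpow_nonneg (hu0 x) q
  have hvq0 : 0 ≤ fun x => v x ^ q := fun x => rpow_nonneg (hv0 x) q
  have hFG : (fun x => F (u x, v x)) = fun x => G (u x ^ q, v x ^ q) :=
    funext fun x => (hG _ _ (hu0 x) (hv0 x)).symm
  have hA : 0 ≤ ∫ x, u x ^ q := integral_nonneg huq0
  have hB : 0 ≤ ∫ x, v x ^ q := integral_nonneg hvq0
  rw [hFG] at hFint ⊢
  rw [← hG _ _ (rpow_nonneg hA _) (rpow_nonneg hB _), one_div, rpow_inv_rpow hA hq0,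
    rpow_inv_rpow hB hq0]
  exact OneHomogeneousOnQuadrant.integral_comp_le hGhom hGconc huq0 hvq0 huq hvq hFint

/-- Hölder-type inequality for a continuous `q`-homogeneous function `F` on `[0,∞)²`
whose associated 1-homogeneous function `G` (with `G(u^q, v^q) = F(u,v)`) is concave:
for nonnegative `u, v ∈ L^q(ℝ^N)`, `∫ F(u, v) ≤ F(‖u‖_{L^q}, ‖v‖_{L^q})`. -/
theorem holder_type_inequality (N : ℕ) (q : ℝ) (hq : 1 ≤ q) (F : ℝ × ℝ → ℝ)
    (hFcont : ContinuousOn F {z : ℝ × ℝ | 0 ≤ z.1 ∧ 0 ≤ z.2})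
    (hhom : ∀ t : ℝ, 0 < t → ∀ u v : ℝ, 0 ≤ u → 0 ≤ v →
      F (t * u, t * v) = t ^ q * F (u, v))
    (G : ℝ × ℝ → ℝ)
    (hG : ∀ u v : ℝ, 0 ≤ u → 0 ≤ v → G (u ^ q, v ^ q) = F (u, v))
    (hGhom : ∀ t : ℝ, 0 < t → ∀ a b : ℝ, 0 ≤ a → 0 ≤ b → G (t * a, t * b) = t * G (a, b))
    (hGconc : ConcaveOn ℝ {z : ℝ × ℝ | 0 ≤ z.1 ∧ 0 ≤ z.2} G)
    (u v : EuclideanSpace ℝ (Fin N) → ℝ)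
    (hu0 : ∀ x, 0 ≤ u x) (hv0 : ∀ x, 0 ≤ v x)
    (huq : Integrable (fun x => u x ^ q)) (hvq : Integrable (fun x => v x ^ q))
    (hFint : Integrable (fun x => F (u x, v x))) :
    ∫ x, F (u x, v x) ≤
      F ((∫ x, u x ^ q) ^ (1 / q), (∫ x, v x ^ q) ^ (1 / q)) :=
  holder_type_inequality_general N q hq F G hG hGhom hGconc u v hu0 hv0 huq hvq hFint
end

section
/- Let η_R : ℝ^N → [0,1] be Lipschitz with |∇η_R| ≤ c/R, η_R = 0 on B_R and η_R = 1 outside B_{2R}. If (u_n) is a bounded sequence in H^s(ℝ^N) with u_n → u strongly in L²_loc(ℝ^N), then lim_{R → ∞} limsup_{n → ∞} ∬_{ℝ^{2N}} |η_R(x) − η_R(y)|² / |x−y|^{N+2s} · u_n(x)² dx dy = 0. -/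
/-!
Since `η_R` takes values in `[0,1]` and is `(c/R)`-Lipschitz, the weight
`|η_R(x) - η_R(y)|² / |x - y|^{N+2s}` is dominated by the kernel
`min ((c/R)² |x - y|², 1) / |x - y|^{N+2s}`. This kernel is integrable in `y` because
`N < N + 2s < N + 2`, and its integral tends to `0` as `R → ∞` by dominated convergence.
Hence the double integral is at most `o(1) · sup_n ‖uₙ‖²_{L²}`, uniformly in `n`.
-/

open Real MeasureTheory Filter Metric Set Module Topology

section TruncatedKernel

variable {E : Type*} [NormedAddCommGroup E]

noncomputable def truncatedKernel (b p : ℝ) (z : E) : ℝ :=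
  min (b * ‖z‖ ^ 2) 1 / ‖z‖ ^ p

lemma truncatedKernel_nonneg {b : ℝ} (hb : 0 ≤ b) (p : ℝ) (z : E) :
    0 ≤ truncatedKernel b p z := by
  unfold truncatedKernel
  have : 0 ≤ min (b * ‖z‖ ^ 2) 1 := le_min (by positivity) zero_le_one
  positivity

lemma truncatedKernel_mono {b b' : ℝ} (h : b ≤ b') (p : ℝ) (z : E) :
    truncatedKernel b p z ≤ truncatedKernel b' p z := by
  unfold truncatedKernel
  gcongr

lemma truncatedKernel_le_mul_rpow {b : ℝ} (hb : 0 ≤ b) (p : ℝ) (z : E) :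
    truncatedKernel b p z ≤ b * ‖z‖ ^ (2 - p) := by
  rcases (norm_nonneg z).eq_or_lt with hz | hz
  · have hzero : truncatedKernel b p z = 0 := by simp [truncatedKernel, ← hz]
    rw [hzero]
    positivity
  · calc truncatedKernel b p z ≤ b * ‖z‖ ^ (2 : ℝ) / ‖z‖ ^ p := by
          rw [rpow_two]
          exact div_le_div_of_nonneg_right (min_le_left _ _) (by positivity)
      _ = b * ‖z‖ ^ (2 - p) := by rw [rpow_sub hz, mul_div_assoc]

lemma truncatedKernel_le_rpow_neg (b p : ℝ) (z : E) :
    truncatedKernel b p z ≤ ‖z‖ ^ (-p) := by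
  rw [rpow_neg (norm_nonneg z), inv_eq_one_div]
  exact div_le_div_of_nonneg_right (min_le_right _ _) (by positivity)

lemma continuous_truncatedKernel_param (p : ℝ) (z : E) :
    Continuous fun b => truncatedKernel b p z := by
  unfold truncatedKernel
  fun_prop

lemma measurable_truncatedKernel [MeasurableSpace E] [OpensMeasurableSpace E] (b p : ℝ) :
    Measurable (truncatedKernel (E := E) b p) := by
  unfold truncatedKernel
  fun_prop

lemma sq_sub_div_dist_rpow_le_truncatedKernel {f : E → ℝ} {L : ℝ}
    (hf : ∀ x, f x ∈ Icc 0 1) (hL : ∀ x y, |f x - f y| ≤ L * dist x y) (p : ℝ) (x y : E) :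
    (f x - f y) ^ 2 / dist x y ^ p ≤ truncatedKernel (L ^ 2) p (y - x) := by
  rw [truncatedKernel, ← dist_eq_norm']
  refine div_le_div_of_nonneg_right (le_min ?_ ?_) (by positivity)
  · rw [← mul_pow, ← sq_abs]
    exact pow_le_pow_left₀ (abs_nonneg _) (hL x y) 2
  · exact (sq_le_one_iff_abs_le_one _).2 <|
      abs_sub_le_of_nonneg_of_le (hf x).1 (hf x).2 (hf y).1 (hf y).2

lemma norm_rpow_neg_le_two_rpow_mul_one_add_norm_rpow_neg {p : ℝ} (hp : 0 ≤ p) {z : E}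
    (hz : 1 ≤ ‖z‖) : ‖z‖ ^ (-p) ≤ 2 ^ p * (1 + ‖z‖) ^ (-p) := by
  calc ‖z‖ ^ (-p) = 2 ^ p * (2 * ‖z‖) ^ (-p) := by
        rw [mul_rpow zero_le_two (norm_nonneg z), ← mul_assoc, ← rpow_add zero_lt_two,
          add_neg_cancel, rpow_zero, one_mul]
    _ ≤ 2 ^ p * (1 + ‖z‖) ^ (-p) := by
        gcongr 2 ^ p * ?_
        exact rpow_le_rpow_of_nonpos (by positivity) (by linarith) (neg_nonpos.2 hp)

end TruncatedKernel

section HaarMeasure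

variable {E : Type*} [NormedAddCommGroup E] [NormedSpace ℝ E] [FiniteDimensional ℝ E]
  [MeasurableSpace E] [BorelSpace E] {μ : Measure E} [μ.IsAddHaarMeasure]

lemma integrable_truncatedKernel (hd : 1 ≤ finrank ℝ E) {b p : ℝ} (hb : 0 ≤ b)
    (hp₁ : (finrank ℝ E : ℝ) < p) (hp₂ : p < finrank ℝ E + 2) :
    Integrable (truncatedKernel b p) μ := by
  have hmeas := (measurable_truncatedKernel (E := E) b p).aestronglyMeasurable (μ := μ)
  rw [← integrableOn_univ, ← union_compl_self (ball (0 : E) 1)]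
  refine .union ?_ ?_
  · refine integrableOn_ball_of_norm_le_rpow hd (C := b) (α := p - 2) (by linarith)
      (.of_forall fun z => ?_) hmeas
    rw [norm_of_nonneg (truncatedKernel_nonneg hb p z), neg_sub]
    exact truncatedKernel_le_mul_rpow hb p z
  · have hp : 0 ≤ p := (Nat.cast_nonneg _).trans hp₁.le
    refine ((integrable_one_add_norm hp₁).const_mul (2 ^ p)).integrableOn.mono'
      hmeas.restrict ?_
    filter_upwards [ae_restrict_mem measurableSet_ball.compl] with z hz
    rw [mem_compl_iff, mem_ball_zero_iff, not_lt] at hz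
    rw [norm_of_nonneg (truncatedKernel_nonneg hb p z)]
    exact (truncatedKernel_le_rpow_neg b p z).trans
      (norm_rpow_neg_le_two_rpow_mul_one_add_norm_rpow_neg hp hz)

lemma tendsto_integral_truncatedKernel (hd : 1 ≤ finrank ℝ E) {p : ℝ}
    (hp₁ : (finrank ℝ E : ℝ) < p) (hp₂ : p < finrank ℝ E + 2) :
    Tendsto (fun b => ∫ z, truncatedKernel b p z ∂μ) (𝓝[≥] 0) (𝓝 0) := by
  suffices Tendsto (fun b => ∫ z, truncatedKernel b p z ∂μ) (𝓝[≥] 0)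
      (𝓝 (∫ z, truncatedKernel 0 p z ∂μ)) by simpa [truncatedKernel] using this
  refine tendsto_integral_filter_of_dominated_convergence (truncatedKernel 1 p)
    (.of_forall fun b => (measurable_truncatedKernel b p).aestronglyMeasurable) ?_
    (integrable_truncatedKernel hd zero_le_one hp₁ hp₂) ?_
  · filter_upwards [Icc_mem_nhdsGE one_pos] with b hb
    refine .of_forall fun z => ?_
    rw [norm_of_nonneg (truncatedKernel_nonneg hb.1 p z)]
    exact truncatedKernel_mono hb.2 p z
  · exact .of_forall fun z =>
      ((continuous_truncatedKernel_param p z).tendsto 0).mono_left nhdsWithin_le_nhds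

lemma integral_sq_sub_div_dist_rpow_le (hd : 1 ≤ finrank ℝ E) {f : E → ℝ} {L p : ℝ}
    (hf : ∀ x, f x ∈ Icc 0 1) (hL : ∀ x y, |f x - f y| ≤ L * dist x y)
    (hp₁ : (finrank ℝ E : ℝ) < p) (hp₂ : p < finrank ℝ E + 2) (x : E) :
    ∫ y, (f x - f y) ^ 2 / dist x y ^ p ∂μ ≤ ∫ z, truncatedKernel (L ^ 2) p z ∂μ := by
  rw [← integral_sub_right_eq_self (truncatedKernel (L ^ 2) p) x]
  refine integral_mono_of_nonneg (.of_forall fun y => by positivity)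
    ((integrable_truncatedKernel hd (sq_nonneg L) hp₁ hp₂).comp_sub_right x)
    (.of_forall fun y => sq_sub_div_dist_rpow_le_truncatedKernel hf hL p x y)

end HaarMeasure

lemma integral_integral_mul_le_of_integral_le {α β : Type*} [MeasurableSpace α]
    [MeasurableSpace β] {μ : Measure α} {ν : Measure β} {w : α → β → ℝ} {g : α → ℝ} {C : ℝ}
    (hC : ∀ x, ∫ y, w x y ∂ν ≤ C) (hw : ∀ x y, 0 ≤ w x y) (hg₀ : ∀ x, 0 ≤ g x)
    (hg : Integrable g μ) :
    ∫ x, ∫ y, w x y * g x ∂ν ∂μ ≤ C * ∫ x, g x ∂μ := by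
  simp_rw [integral_mul_const]
  rw [← integral_const_mul]
  exact integral_mono_of_nonneg
    (.of_forall fun x => mul_nonneg (integral_nonneg (hw x)) (hg₀ x)) (hg.const_mul C)
    (.of_forall fun x => mul_le_mul_of_nonneg_right (hC x) (hg₀ x))

theorem cutoff_commutator_vanishing_general (N : ℕ) (s c M : ℝ) (hs : s ∈ Set.Ioo (0 : ℝ) 1)
    (hN : 2 * s < N)
    (η : ℝ → EuclideanSpace ℝ (Fin N) → ℝ)
    (hη01 : ∀ R : ℝ, 0 < R → ∀ x, η R x ∈ Set.Icc (0 : ℝ) 1)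
    (hηlip : ∀ R : ℝ, 0 < R → ∀ x y, |η R x - η R y| ≤ c / R * dist x y)
    (u : ℕ → EuclideanSpace ℝ (Fin N) → ℝ)
    (hmem : ∀ n, MemLp (u n) 2 volume)
    (hbdd : ∀ n, (∫ x, u n x ^ 2) +
      (∫ x, ∫ y, (u n x - u n y) ^ 2 / dist x y ^ ((N : ℝ) + 2 * s)) ≤ M) :
    Tendsto (fun R : ℝ =>
        limsup (fun n =>
          ∫ x, ∫ y, (η R x - η R y) ^ 2 / dist x y ^ ((N : ℝ) + 2 * s) * u n x ^ 2) atTop)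
      atTop (nhds 0) := by
  obtain ⟨hs₀, hs₁⟩ := hs
  have hd : 1 ≤ finrank ℝ (EuclideanSpace ℝ (Fin N)) := by
    rw [finrank_euclideanSpace_fin]
    exact_mod_cast (by linarith : (0 : ℝ) < N)
  have hp₁ : (finrank ℝ (EuclideanSpace ℝ (Fin N)) : ℝ) < N + 2 * s := by
    rw [finrank_euclideanSpace_fin]; linarith
  have hp₂ : (N : ℝ) + 2 * s < finrank ℝ (EuclideanSpace ℝ (Fin N)) + 2 := by
    rw [finrank_euclideanSpace_fin]; linarith
  set κ : ℝ → ℝ := fun R =>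
    ∫ z : EuclideanSpace ℝ (Fin N), truncatedKernel ((c / R) ^ 2) ((N : ℝ) + 2 * s) z
  have hL2 : ∀ n, ∫ x, u n x ^ 2 ≤ M := fun n => by
    have : 0 ≤ ∫ x, ∫ y, (u n x - u n y) ^ 2 / dist x y ^ ((N : ℝ) + 2 * s) :=
      integral_nonneg fun x => integral_nonneg fun y => by positivity
    linarith [hbdd n]
  have hF₀ : ∀ R n,
      0 ≤ ∫ x, ∫ y, (η R x - η R y) ^ 2 / dist x y ^ ((N : ℝ) + 2 * s) * u n x ^ 2 :=
    fun R n => integral_nonneg fun x => integral_nonneg fun y => by positivity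
  have hF : ∀ R, 0 < R → ∀ n,
      ∫ x, ∫ y, (η R x - η R y) ^ 2 / dist x y ^ ((N : ℝ) + 2 * s) * u n x ^ 2
        ≤ κ R * M :=
    fun R hR n => calc
      _ ≤ κ R * ∫ x, u n x ^ 2 :=
        integral_integral_mul_le_of_integral_le
          (integral_sq_sub_div_dist_rpow_le hd (hη01 R hR) (hηlip R hR) hp₁ hp₂)
          (fun x y => by positivity)
          (fun x => sq_nonneg _) (hmem n).integrable_sq
      _ ≤ κ R * M := mul_le_mul_of_nonneg_left (hL2 n)
        (integral_nonneg (truncatedKernel_nonneg (sq_nonneg _) _))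
  have hκ : Tendsto (fun R => κ R * M) atTop (𝓝 0) := by
    have hb : Tendsto (fun R : ℝ => (c / R) ^ 2) atTop (𝓝[≥] 0) :=
      tendsto_nhdsWithin_iff.2 ⟨by
        simpa using ((tendsto_const_nhds (x := c)).div_atTop tendsto_id).pow 2,
        .of_forall fun R => mem_Ici.2 (sq_nonneg _)⟩
    simpa using ((tendsto_integral_truncatedKernel hd hp₁ hp₂).comp hb).mul_const M
  refine tendsto_of_tendsto_of_tendsto_of_le_of_le' tendsto_const_nhds hκ ?_ ?_
  · filter_upwards [eventually_gt_atTop 0] with R hR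
    exact le_limsup_of_frequently_le (.of_forall (hF₀ R)) (isBoundedUnder_of ⟨_, hF R hR⟩)
  · filter_upwards [eventually_gt_atTop 0] with R hR
    exact limsup_le_of_le (isCoboundedUnder_le_of_le atTop (hF₀ R)) (.of_forall (hF R hR))

/-- Vanishing commutator estimate for cutoffs at infinity: if `(uₙ)` is bounded in
`H^s(ℝ^N)` and `uₙ → u` strongly in `L²_loc`, and `η_R` are cutoffs vanishing on `B_R`,
equal to `1` outside `B_{2R}`, with `|∇η_R| ≤ c/R`, then
`lim_{R→∞} limsup_n ∬ |η_R(x) − η_R(y)|²/|x−y|^{N+2s} uₙ(x)² dx dy = 0`. -/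
theorem cutoff_commutator_vanishing (N : ℕ) (s c M : ℝ) (hs : s ∈ Set.Ioo (0 : ℝ) 1)
    (hN : 2 * s < N) (hc : 0 < c)
    (η : ℝ → EuclideanSpace ℝ (Fin N) → ℝ)
    (hη01 : ∀ R : ℝ, 0 < R → ∀ x, η R x ∈ Set.Icc (0 : ℝ) 1)
    (hηlip : ∀ R : ℝ, 0 < R → ∀ x y, |η R x - η R y| ≤ c / R * dist x y)
    (hη0 : ∀ R : ℝ, 0 < R → ∀ x ∈ Metric.ball (0 : EuclideanSpace ℝ (Fin N)) R, η R x = 0)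
    (hη1 : ∀ R : ℝ, 0 < R → ∀ x ∉ Metric.ball (0 : EuclideanSpace ℝ (Fin N)) (2 * R),
      η R x = 1)
    (u : ℕ → EuclideanSpace ℝ (Fin N) → ℝ) (ulim : EuclideanSpace ℝ (Fin N) → ℝ)
    (hmem : ∀ n, MemLp (u n) 2 volume)
    (hbdd : ∀ n, (∫ x, u n x ^ 2) +
      (∫ x, ∫ y, (u n x - u n y) ^ 2 / dist x y ^ ((N : ℝ) + 2 * s)) ≤ M)
    (hloc : ∀ r : ℝ, 0 < r →
      Tendsto (fun n => ∫ x in Metric.ball (0 : EuclideanSpace ℝ (Fin N)) r,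
        (u n x - ulim x) ^ 2) atTop (nhds 0)) :
    Tendsto (fun R : ℝ =>
        limsup (fun n =>
          ∫ x, ∫ y, (η R x - η R y) ^ 2 / dist x y ^ ((N : ℝ) + 2 * s) * u n x ^ 2) atTop)
      atTop (nhds 0) :=
  cutoff_commutator_vanishing_general N s c M hs hN η hη01 hηlip u hmem hbdd
end
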